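/- arXiv:2409.04715 — 3 statements merged into one kernel-verified Lean document; each statement's English description precedes it below -/
import Mathlib

section
/- Let φ: L(t) → L(t') be a cluster morphism between seeds t = ({x_i}_{i∈I}, I_uf, B) and t' = ({y_j}_{j∈I'}, I'_uf, B'), with F = {i ∈ I : φ(x_i) = 1}. Then B'_{j,φ(i)} = 0 for every i ∈ I_uf∖F and every j ∈ I'∖φ(I∖F). -/
open scoped BigOperators

noncomputable section

/-- The Laurent polynomial ring `ℚ[x_i^{±1} : i ∈ I]`, realized as the group algebra
over `ℚ` of the free abelian group `I →₀ ℤ`. -/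
abbrev LaurentRing (I : Type*) : Type _ := AddMonoidAlgebra ℚ (I →₀ ℤ)

instance (I : Type*) : IsDomain (LaurentRing I) := NoZeroDivisors.to_isDomain _

/-- The Laurent variable `x_i`. -/
def Xv {I : Type*} (i : I) : LaurentRing I :=
  AddMonoidAlgebra.single (Finsupp.single i 1) 1

/-- The inverse Laurent variable `x_i⁻¹`. -/
def Xinv {I : Type*} (i : I) : LaurentRing I :=
  AddMonoidAlgebra.single (Finsupp.single i (-1)) 1

/-- A seed on the vertex set `I`: a set `uf` of unfrozen vertices together with an integer
exchange matrix `B` (rows indexed by `I`, columns meaningful only for `j ∈ uf`) whose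
principal part is skew-symmetric.  The cluster variables of the seed are the standard
generators `Xv i` of the Laurent polynomial ring `LaurentRing I`. -/
structure Seed (I : Type*) where
  uf : Set I
  B : I → I → ℤ
  skew : ∀ i ∈ uf, ∀ j ∈ uf, B i j = - B j i

open Classical in
/-- Mutation of the exchange matrix at the vertex `k`:
`(μ_k B)_{ij} = -b_{ij}` if `i = k` or `j = k`, and
`(μ_k B)_{ij} = b_{ij} + sgn(b_{ik}) * max (b_{ik} b_{kj}) 0` otherwise. -/
def mutB {I : Type*} (B : I → I → ℤ) (k : I) : I → I → ℤ := fun i j =>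
  if i = k ∨ j = k then - B i j
  else B i j + (B i k).sign * max (B i k * B k j) 0

/-- The one-step mutated cluster variable `μ_k(x)_k`, as an element of the Laurent ring:
`(∏_{j : b_{jk} > 0} x_j^{b_{jk}} + ∏_{j : b_{jk} < 0} x_j^{-b_{jk}}) / x_k`. -/
def exchVar {I : Type*} (B : I → I → ℤ) (k : I) : LaurentRing I :=
  ((∏ᶠ j : I, Xv j ^ (max (B j k) 0).toNat) +
    (∏ᶠ j : I, Xv j ^ (max (-(B j k)) 0).toNat)) * Xinv k

/-- A cluster morphism from the seed `t` to the seed `t'`: a ring homomorphism `hom`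
between the Laurent polynomial rings sending each cluster variable `x_i` either to `1`
(the set of such `i` being `F`) or to a cluster variable `y_{vmap i}`, such that the induced
vertex map is injective on `I ∖ F`, maps unfrozen vertices off `F` to unfrozen vertices,
intertwines the one-step mutated variables there, and satisfies the sign condition
`b_{ij} * b'_{vmap i, vmap j} ≥ 0` on unfrozen vertices off `F`. -/
structure ClusterMorphism {I I' : Type*} (t : Seed I) (t' : Seed I') where
  hom : LaurentRing I →+* LaurentRing I'
  vmap : I → I'
  hx : ∀ i : I, hom (Xv i) = 1 ∨ hom (Xv i) = Xv (vmap i)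
  vinj : ∀ i i' : I, hom (Xv i) ≠ 1 → hom (Xv i') ≠ 1 → vmap i = vmap i' → i = i'
  huf : ∀ i ∈ t.uf, hom (Xv i) ≠ 1 → vmap i ∈ t'.uf
  hmut : ∀ i ∈ t.uf, hom (Xv i) ≠ 1 → hom (exchVar t.B i) = exchVar t'.B (vmap i)
  hsign : ∀ i ∈ t.uf, ∀ j ∈ t.uf, hom (Xv i) ≠ 1 → hom (Xv j) ≠ 1 →
    0 ≤ t.B i j * t'.B (vmap i) (vmap j)

/-!
Evaluate at the point `x_j = 3`, all other variables `1`, where `j ∉ φ(I ∖ F)`. Composed with `φ`,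
this evaluation sends every `x_k` to `1`, so the mutated variable `μ_i(x)_i` goes to `1 + 1`. By
the intertwining property that equals the value of `μ_{φ(i)}(y)_{φ(i)}`, which is
`3 ^ b⁺ + 3 ^ b⁻` for `b = B'_{j, φ(i)}`; hence `b⁺ = b⁻ = 0`.
-/

namespace LaurentRing

variable {I : Type*}

theorem Xv_mul_Xinv (i : I) : Xv i * Xinv i = 1 := by
  rw [Xv, Xinv, AddMonoidAlgebra.single_mul_single, ← Finsupp.single_add, add_neg_cancel,
    Finsupp.single_zero, mul_one, AddMonoidAlgebra.one_def]

theorem map_Xinv_eq_one {R : Type*} [Semiring R] {f : LaurentRing I →+* R} {i : I}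
    (h : f (Xv i) = 1) : f (Xinv i) = 1 := by
  simpa [h] using congrArg f (Xv_mul_Xinv i)

/-- Evaluation at the point whose `j`-th coordinate is `u` and whose other coordinates are `1`. -/
def evalSingle (j : I) (u : ℚˣ) : LaurentRing I →+* ℚ :=
  (AddMonoidAlgebra.lift ℚ ℚ (I →₀ ℤ)
    ((Units.coeHom ℚ).comp ((zpowersHom ℚˣ u).comp
      (AddMonoidHom.toMultiplicative (Finsupp.applyAddHom j))))).toRingHom

theorem evalSingle_single (j : I) (u : ℚˣ) (m : I →₀ ℤ) (q : ℚ) :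
    evalSingle j u (AddMonoidAlgebra.single m q) = q * (u : ℚ) ^ m j := by
  simp [evalSingle, AddMonoidAlgebra.lift_single, zpowersHom]

theorem evalSingle_Xv [DecidableEq I] (j k : I) (u : ℚˣ) :
    evalSingle j u (Xv k) = if k = j then (u : ℚ) else 1 := by
  rw [Xv, evalSingle_single]
  split_ifs with h <;> simp [h]

theorem evalSingle_Xv_of_ne {j k : I} (h : k ≠ j) (u : ℚˣ) : evalSingle j u (Xv k) = 1 := by
  classical
  simp [evalSingle_Xv, h]

theorem evalSingle_Xinv_of_ne {j k : I} (h : k ≠ j) (u : ℚˣ) : evalSingle j u (Xinv k) = 1 :=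
  map_Xinv_eq_one (evalSingle_Xv_of_ne h u)

theorem evalSingle_finprod_Xv_pow [Finite I] (j : I) (u : ℚˣ) (e : I → ℕ) :
    evalSingle j u (∏ᶠ k, Xv k ^ e k) = (u : ℚ) ^ e j := by
  classical
  rw [map_finprod _ (Set.toFinite _), finprod_eq_single _ j]
  · simp [evalSingle_Xv]
  · intro k hk
    rw [map_pow, evalSingle_Xv_of_ne hk, one_pow]

theorem evalSingle_exchVar [Finite I] (B : I → I → ℤ) {j k : I} (h : k ≠ j) (u : ℚˣ) :
    evalSingle j u (exchVar B k) =
      (u : ℚ) ^ (max (B j k) 0).toNat + (u : ℚ) ^ (max (-B j k) 0).toNat := by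
  rw [exchVar, map_mul, map_add, evalSingle_finprod_Xv_pow, evalSingle_finprod_Xv_pow,
    evalSingle_Xinv_of_ne h, mul_one]

theorem map_finprod_Xv_pow_eq_one {R : Type*} [Semiring R] {f : LaurentRing I →+* R}
    (hf : ∀ i, f (Xv i) = 1) (e : I → ℕ) : f (∏ᶠ i, Xv i ^ e i) = 1 :=
  finprod_induction (fun p => f p = 1) (map_one f)
    (fun p q hp hq => by rw [map_mul, hp, hq, mul_one]) (fun i => by rw [map_pow, hf, one_pow])

theorem map_exchVar_eq_two {R : Type*} [Semiring R] {f : LaurentRing I →+* R}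
    (hf : ∀ i, f (Xv i) = 1) (B : I → I → ℤ) (k : I) : f (exchVar B k) = 2 := by
  rw [exchVar, map_mul, map_add, map_finprod_Xv_pow_eq_one hf, map_finprod_Xv_pow_eq_one hf,
    map_Xinv_eq_one (hf k), one_add_one_eq_two, mul_one]

end LaurentRing

theorem eq_zero_and_eq_zero_of_pow_add_pow_eq_two {R : Type*} [Semiring R] [LinearOrder R]
    [IsStrictOrderedRing R] {x : R} (hx : 1 < x) {a b : ℕ} (h : x ^ a + x ^ b = 2) :
    a = 0 ∧ b = 0 := by
  rw [← one_add_one_eq_two] at h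
  constructor <;> by_contra hne
  · exact (add_lt_add_of_lt_of_le (one_lt_pow₀ hx hne) (one_le_pow₀ hx.le)).ne' h
  · exact (add_lt_add_of_le_of_lt (one_le_pow₀ hx.le) (one_lt_pow₀ hx hne)).ne' h

theorem ClusterMorphism.evalSingle_hom_Xv {I I' : Type*} {t : Seed I} {t' : Seed I'}
    (c : ClusterMorphism t t') {j : I'} (hj : ¬ ∃ i : I, c.hom (Xv i) ≠ 1 ∧ c.vmap i = j)
    (u : ℚˣ) (i : I) : LaurentRing.evalSingle j u (c.hom (Xv i)) = 1 := by
  by_cases h1 : c.hom (Xv i) = 1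
  · rw [h1, map_one]
  · rw [(c.hx i).resolve_left h1]
    exact LaurentRing.evalSingle_Xv_of_ne (fun h => hj ⟨i, h1, h⟩) u

theorem statement0_general {I I' : Type*} [Finite I'] (t : Seed I) (t' : Seed I')
    (c : ClusterMorphism t t') (i : I) (hi : i ∈ t.uf) (hiF : c.hom (Xv i) ≠ 1)
    (j : I') (hj : ¬ ∃ i' : I, c.hom (Xv i') ≠ 1 ∧ c.vmap i' = j) :
    t'.B j (c.vmap i) = 0 := by
  set ev := LaurentRing.evalSingle j (Units.mk0 (3 : ℚ) three_ne_zero)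
  have hvals := LaurentRing.map_exchVar_eq_two (f := ev.comp c.hom) (c.evalSingle_hom_Xv hj _) t.B i
  rw [RingHom.comp_apply, c.hmut i hi hiF,
    LaurentRing.evalSingle_exchVar _ (fun h => hj ⟨i, hiF, h⟩)] at hvals
  have := eq_zero_and_eq_zero_of_pow_add_pow_eq_two (by norm_num) hvals
  omega

/-- For a cluster morphism `φ : L(t) → L(t')` with
`F = {i ∈ I : φ(x_i) = 1}`, one has `B'_{j, φ(i)} = 0` for every `i ∈ I_uf ∖ F` and every
`j ∈ I' ∖ φ(I ∖ F)`. -/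
theorem statement0 {I I' : Type*} [Finite I] [Finite I'] (t : Seed I) (t' : Seed I')
    (c : ClusterMorphism t t') (i : I) (hi : i ∈ t.uf) (hiF : c.hom (Xv i) ≠ 1)
    (j : I') (hj : ¬ ∃ i' : I, c.hom (Xv i') ≠ 1 ∧ c.vmap i' = j) :
    t'.B j (c.vmap i) = 0 :=
  statement0_general t t' c i hi hiF j hj

end
end

section
/- Let φ: L(t) → L(t') be a cluster morphism between seeds t = ({x_i}_{i∈I}, I_uf, B) and t' = ({y_j}_{j∈I'}, I'_uf, B'), with F = {i ∈ I : φ(x_i) = 1}. For any finite sequence 𝐢 = (i_1, …, i_n) of vertices of I_uf∖F and for every i ∈ I∖F, one has φ(μ_𝐢(x)_i) = μ_{φ(𝐢)}(y)_{φ(i)}, where μ_𝐢(x)_i denotes the i-th cluster variable of the iterated mutation μ_{i_n}(⋯μ_{i_1}(t)⋯) and μ_{φ(𝐢)}(y)_{φ(i)} denotes the φ(i)-th cluster variable of μ_{φ(i_n)}(⋯μ_{φ(i_1)}(t')⋯). In other words, φ intertwines arbitrary mutation sequences supported on vertices where it is defined. -/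
open scoped BigOperators

noncomputable section

/-- The fraction field of the Laurent polynomial ring, where iterated mutated cluster
variables live. -/
abbrev LField (I : Type*) : Type _ := FractionRing (LaurentRing I)

open Classical in
/-- Mutation of a cluster at the vertex `k`, inside an ambient field:
`μ_k(x)_k = (∏_{j : b_{jk} > 0} x_j^{b_{jk}} + ∏_{j : b_{jk} < 0} x_j^{-b_{jk}}) / x_k`
and `μ_k(x)_i = x_i` for `i ≠ k`. -/
def mutX {I K : Type*} [Field K] (B : I → I → ℤ) (k : I) (x : I → K) : I → K := fun i =>
  if i = k then
    ((∏ᶠ j : I, x j ^ max (B j k) 0) + (∏ᶠ j : I, x j ^ max (-(B j k)) 0)) / x k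
  else x i

/-- Iterated mutation of a pair (exchange matrix, cluster) along a list of vertices;
the head of the list is mutated first. -/
def mutSeq {I K : Type*} [Field K] (l : List I) (p : (I → I → ℤ) × (I → K)) :
    (I → I → ℤ) × (I → K) :=
  l.foldl (fun q k => (mutB q.1 k, mutX q.1 k q.2)) p

/-- The initial cluster of a seed pattern, viewed inside the fraction field. -/
def xGen (I : Type*) : I → LField I := fun i => algebraMap (LaurentRing I) (LField I) (Xv i)

/-- `z` is a cluster variable of the mutation pattern with initial data `(uf, B₀, x₀)`:
it occurs in the cluster of a seed obtained from the initial one by a finite sequence of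
mutations at unfrozen vertices. -/
def IsClusterVariable {J K : Type*} [Field K] (uf : Set J) (B₀ : J → J → ℤ) (x₀ : J → K)
    (z : K) : Prop :=
  ∃ l : List J, (∀ k ∈ l, k ∈ uf) ∧ ∃ j : J, z = (mutSeq l (B₀, x₀)).2 j

/-- `m` is a cluster monomial of the mutation pattern with initial data `(uf, B₀, x₀)`:
a product of cluster variables all belonging to a single seed obtained from the initial one
by a finite sequence of mutations at unfrozen vertices. -/
def IsClusterMonomial {J K : Type*} [Field K] (uf : Set J) (B₀ : J → J → ℤ) (x₀ : J → K)
    (m : K) : Prop :=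
  ∃ l : List J, (∀ k ∈ l, k ∈ uf) ∧
    ∃ a : J → ℕ, m = ∏ᶠ j : J, (mutSeq l (B₀, x₀)).2 j ^ a j

/-- The cluster algebra of the pattern with initial data `(uf, B₀, x₀)`: the `ℚ`-subalgebra
of the ambient field generated by all cluster variables. -/
def clusterAlgebra {J K : Type*} [Field K] [Algebra ℚ K] (uf : Set J) (B₀ : J → J → ℤ)
    (x₀ : J → K) : Subalgebra ℚ K :=
  Algebra.adjoin ℚ {z | IsClusterVariable uf B₀ x₀ z}

/-!
Inside `Frac L(t)` consider the pairs `(a / b, φ a / φ b)` with `φ b ≠ 0`. They form a subring of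
`Frac L(t) × Frac L(t')`, which is moreover closed under division by pairs whose second entry is
nonzero. Comparing the two monomials of `φ(μ_k(x)_k) = μ_{φ k}(y)_{φ k}` shows that column `φ k` of
`B'` is `±` the transport of column `k` of `B` along `φ`, the sign `-1` being possible only when
the sign condition kills column `k` of `B` on `I_uf ∖ F`. This column compatibility is exactly
what matches the exchange binomials of `x` and `y`, and it survives matrix mutation at any vertex
of `I_uf ∖ F`, so the pairs `(μ_𝐢(x)_i, μ_{φ(𝐢)}(y)_{φ i})` stay in the subring along the whole
sequence. The denominators `μ(y)_{φ k}` never vanish since they evaluate to positive rationals at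
`y = (1, …, 1)`.
-/

lemma Int.toNat_max_zero (a : ℤ) : (max a 0).toNat = a.toNat := by
  omega

lemma Int.sign_mul_max_zero_comm (a b : ℤ) : a.sign * max (a * b) 0 = b.sign * max (a * b) 0 := by
  rcases le_or_gt (a * b) 0 with h | h
  · simp [max_eq_right h]
  · rcases mul_pos_iff.mp h with ⟨ha, hb⟩ | ⟨ha, hb⟩
    · rw [Int.sign_eq_one_of_pos ha, Int.sign_eq_one_of_pos hb]
    · rw [Int.sign_eq_neg_one_of_neg ha, Int.sign_eq_neg_one_of_neg hb]

lemma Int.units_mul_add_sign_mul_max (ε₀ ε : ℤˣ) {a b c : ℤ} (h : ε₀ ≠ 1 ∨ ε ≠ 1 → b = 0) :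
    ε * (c + a.sign * max (a * b) 0) = ε * c + (ε₀ * a).sign * max (ε₀ * a * (ε * b)) 0 := by
  by_cases hε : ε₀ = 1 ∧ ε = 1
  · simp [hε.1, hε.2]
  · simp [h (not_and_or.mp hε)]

lemma Finsupp.sum_single_apply_of_injOn {ι κ M : Type*} [AddCommMonoid M] {s : Finset ι}
    {σ : ι → κ} (hσ : Set.InjOn σ s) (b : ι → M) {i : ι} (hi : i ∈ s) :
    (∑ j ∈ s, Finsupp.single (σ j) (b j)) (σ i) = b i := by
  classical
  rw [Finsupp.finsetSum_apply, Finset.sum_eq_single_of_mem i hi, Finsupp.single_eq_same]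
  exact fun j hj hji => Finsupp.single_eq_of_ne fun h => hji (hσ hj hi h.symm)

lemma Finsupp.sum_single_apply_of_notMem_image {ι κ M : Type*} [AddCommMonoid M]
    {s : Finset ι} {σ : ι → κ} (b : ι → M) {x : κ} (hx : x ∉ σ '' s) :
    (∑ j ∈ s, Finsupp.single (σ j) (b j)) x = 0 := by
  classical
  rw [Finsupp.finsetSum_apply]
  exact Finset.sum_eq_zero fun j hj => Finsupp.single_eq_of_ne fun h => hx ⟨j, hj, h.symm⟩

lemma Finsupp.sum_single_toNat_sub {ι κ : Type*} (s : Finset ι) (σ : ι → κ) (b : ι → ℤ) :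
    ∑ j ∈ s, Finsupp.single (σ j) ((b j).toNat : ℤ) -
      ∑ j ∈ s, Finsupp.single (σ j) ((-b j).toNat : ℤ) = ∑ j ∈ s, Finsupp.single (σ j) (b j) := by
  rw [← Finset.sum_sub_distrib]
  refine Finset.sum_congr rfl fun j _ => ?_
  rw [← Finsupp.single_sub]
  congr 1
  omega

lemma AddMonoidAlgebra.exists_unit_sub_eq_of_single_add_single {k G : Type*} [Semiring k]
    [CharZero k] [AddCommGroup G] {u v u' v' : G}
    (h : single u (1 : k) + single v 1 = single u' 1 + single v' 1) :
    ∃ ε : ℤˣ, u - v = (ε : ℤ) • (u' - v') := by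
  rcases (single_add_single_inj one_ne_zero one_ne_zero).mp h with
    ⟨rfl, rfl⟩ | ⟨-, rfl, rfl⟩ | ⟨h2, -⟩
  · exact ⟨1, by simp⟩
  · exact ⟨-1, by simp⟩
  · norm_num at h2

section ProdMem

variable {ι κ M N S : Type*} [Fintype ι] [CommMonoid M] [CommMonoid N] [SetLike S (M × N)]
  [SubmonoidClass S (M × N)] (s : S)

lemma prod_pow_mem {f : ι → M} {g : ι → N} (n : ι → ℕ) (h : ∀ i, (f i, g i) ∈ s) :
    (∏ i, f i ^ n i, ∏ i, g i ^ n i) ∈ s := by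
  rw [prod_mk_prod]
  exact prod_mem fun i _ => by simpa using pow_mem (h i) (n i)

lemma prod_pow_mem_of_injOn [Fintype κ] {D : Set ι} {σ : ι → κ} (hσ : Set.InjOn σ D)
    {f : ι → M} {g : κ → N} {n : ι → ℕ} {m : κ → ℕ}
    (hD : ∀ i ∈ D, (f i, g (σ i)) ∈ s) (hDc : ∀ i ∉ D, (f i, 1) ∈ s)
    (hm : ∀ i ∈ D, m (σ i) = n i) (hm₀ : ∀ j ∉ σ '' D, m j = 0) :
    (∏ i, f i ^ n i, ∏ j, g j ^ m j) ∈ s := by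
  classical
  have hprod : ∏ i, (if i ∈ D then g (σ i) else 1) ^ n i = ∏ j, g j ^ m j := by
    simp only [ite_pow, one_pow]
    rw [← Finset.prod_filter]
    refine Finset.prod_of_injOn σ (fun i hi j hj => hσ (by simpa using hi) (by simpa using hj))
      (fun _ _ => Finset.mem_coe.2 (Finset.mem_univ _)) (fun j _ hj => ?_) fun i hi => ?_
    · rw [hm₀ j fun ⟨i, hi, hij⟩ => hj ⟨i, by simpa using hi, hij⟩, pow_zero]
    · rw [hm i (by simpa using hi)]
  rw [← hprod]
  refine prod_pow_mem s n fun i => ?_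
  by_cases hi : i ∈ D
  · simpa [hi] using hD i hi
  · simpa [hi] using hDc i hi

end ProdMem

section FracGraph

variable {R K K' : Type*} [CommRing R] [Field K] [Algebra R K] [IsFractionRing R K] [Field K']
  {χ : R →+* K'}

lemma algebraMap_ne_zero_of_map_ne_zero {b : R} (hb : χ b ≠ 0) : algebraMap R K b ≠ 0 :=
  (map_ne_zero_iff _ (IsFractionRing.injective R K)).mpr fun h => hb (by simp [h])

variable (K) in
/-- The graph of the extension of `χ` to the localization of `R` at the prime `ker χ`, viewed
inside `K`. -/
def fracGraph (χ : R →+* K') : Subring (K × K') where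
  carrier := {p | ∃ a b : R, χ b ≠ 0 ∧ p = (algebraMap R K a / algebraMap R K b, χ a / χ b)}
  one_mem' := ⟨1, 1, by simp, by ext <;> simp⟩
  zero_mem' := ⟨0, 1, by simp, by ext <;> simp⟩
  mul_mem' := by
    rintro _ _ ⟨a, b, hb, rfl⟩ ⟨a', b', hb', rfl⟩
    exact ⟨a * a', b * b', by simpa using mul_ne_zero hb hb', by simp [div_mul_div_comm]⟩
  add_mem' := by
    rintro _ _ ⟨a, b, hb, rfl⟩ ⟨a', b', hb', rfl⟩
    refine ⟨a * b' + a' * b, b * b', by simpa using mul_ne_zero hb hb', ?_⟩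
    simp only [Prod.mk_add_mk, map_add, map_mul, div_add_div _ _ hb hb',
      div_add_div _ _ (algebraMap_ne_zero_of_map_ne_zero hb)
        (algebraMap_ne_zero_of_map_ne_zero hb')]
    ring_nf
  neg_mem' := by
    rintro _ ⟨a, b, hb, rfl⟩
    exact ⟨-a, b, hb, by simp [neg_div]⟩

lemma algebraMap_mem_fracGraph (a : R) : (algebraMap R K a, χ a) ∈ fracGraph K χ :=
  ⟨a, 1, by simp, by simp⟩

lemma inv_mem_fracGraph {x : K} {z : K'} (h : (x, z) ∈ fracGraph K χ) (hz : z ≠ 0) :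
    (x⁻¹, z⁻¹) ∈ fracGraph K χ := by
  obtain ⟨a, b, hb, hab⟩ := h
  simp only [Prod.mk.injEq] at hab
  obtain ⟨rfl, rfl⟩ := hab
  exact ⟨b, a, fun ha => hz (by simp [ha]), by simp⟩

lemma div_mem_fracGraph {x x' : K} {z z' : K'} (h : (x, z) ∈ fracGraph K χ)
    (h' : (x', z') ∈ fracGraph K χ) (hz' : z' ≠ 0) : (x / x', z / z') ∈ fracGraph K χ := by
  simpa only [div_eq_mul_inv, Prod.mk_mul_mk] using mul_mem h (inv_mem_fracGraph h' hz')

lemma ne_zero_of_mem_fracGraph {x : K} {z : K'} (h : (x, z) ∈ fracGraph K χ) (hz : z ≠ 0) :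
    x ≠ 0 := by
  obtain ⟨a, b, hb, hab⟩ := h
  simp only [Prod.mk.injEq] at hab
  obtain ⟨rfl, rfl⟩ := hab
  exact div_ne_zero (algebraMap_ne_zero_of_map_ne_zero (χ := χ) fun ha => hz (by simp [ha]))
    (algebraMap_ne_zero_of_map_ne_zero hb)

end FracGraph

section Laurent

variable {I : Type*}

lemma Xv_ne_zero (i : I) : Xv i ≠ 0 := by
  simp [Xv]

lemma Xv_mul_Xinv (i : I) : Xv i * Xinv i = 1 := by
  simp [Xv, Xinv, AddMonoidAlgebra.one_def]

lemma Xinv_ne_zero (i : I) : Xinv i ≠ 0 :=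
  right_ne_zero_of_mul_eq_one (Xv_mul_Xinv i)

lemma prod_Xv_pow {ι : Type*} (s : Finset ι) (σ : ι → I) (n : ι → ℕ) :
    ∏ j ∈ s, Xv (σ j) ^ n j =
      AddMonoidAlgebra.single (∑ j ∈ s, Finsupp.single (σ j) (n j : ℤ)) 1 := by
  simp only [Xv, AddMonoidAlgebra.single_pow, AddMonoidAlgebra.prod_single, one_pow,
    Finset.prod_const_one, Finsupp.smul_single, nsmul_eq_mul, mul_one]

lemma exchVar_eq [Fintype I] (B : I → I → ℤ) (k : I) :
    exchVar B k = (∏ j, Xv j ^ (B j k).toNat + ∏ j, Xv j ^ (-B j k).toNat) * Xinv k := by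
  simp only [exchVar, finprod_eq_prod_of_fintype, Int.toNat_max_zero]

variable (I) in
def evalOne : LaurentRing I →+* ℚ :=
  (AddMonoidAlgebra.lift ℚ ℚ (I →₀ ℤ) 1).toRingHom

lemma evalOne_Xv (i : I) : evalOne I (Xv i) = 1 := by
  simp [evalOne, Xv]

end Laurent

section Mutation

variable {J : Type*}

lemma mutB_self_left (B : J → J → ℤ) (k j : J) : mutB B k k j = -B k j := by
  simp [mutB]

lemma mutB_self_right (B : J → J → ℤ) (k i : J) : mutB B k i k = -B i k := by
  simp [mutB]

lemma mutB_of_ne (B : J → J → ℤ) {k i j : J} (hi : i ≠ k) (hj : j ≠ k) :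
    mutB B k i j = B i j + (B i k).sign * max (B i k * B k j) 0 := by
  simp [mutB, hi, hj]

lemma mutB_skew {uf : Set J} {B : J → J → ℤ} (hB : ∀ i ∈ uf, ∀ j ∈ uf, B i j = -B j i)
    {k : J} (hk : k ∈ uf) : ∀ i ∈ uf, ∀ j ∈ uf, mutB B k i j = -mutB B k j i := by
  intro i hi j hj
  by_cases hik : i = k
  · subst hik; simp [mutB_self_left, mutB_self_right, hB i hi j hj]
  by_cases hjk : j = k
  · subst hjk; simp [mutB_self_left, mutB_self_right, hB i hi j hj]
  rw [mutB_of_ne B hik hjk, mutB_of_ne B hjk hik, hB j hj i hi, hB j hj k hk, hB k hk i hi,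
    Int.sign_neg, neg_mul_neg, mul_comm (B k j), Int.sign_mul_max_zero_comm (B i k)]
  ring

variable {K : Type*} [Field K]

lemma zpow_max_zero (x : K) (e : ℤ) : x ^ max e 0 = x ^ e.toNat := by
  rw [← zpow_natCast, Int.toNat_eq_max]

lemma mutX_self [Fintype J] (B : J → J → ℤ) (k : J) (x : J → K) :
    mutX B k x k = ((∏ j, x j ^ (B j k).toNat) + ∏ j, x j ^ (-B j k).toNat) / x k := by
  simp only [mutX, ↓reduceIte, finprod_eq_prod_of_fintype, zpow_max_zero]

lemma mutX_of_ne (B : J → J → ℤ) (x : J → K) {k i : J} (h : i ≠ k) : mutX B k x i = x i := by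
  simp [mutX, h]

lemma mutSeq_cons (k : J) (l : List J) (p : (J → J → ℤ) × (J → K)) :
    mutSeq (k :: l) p = mutSeq l (mutB p.1 k, mutX p.1 k p.2) :=
  rfl

variable [Fintype J]

lemma mutX_pos [LinearOrder K] [IsStrictOrderedRing K] (B : J → J → ℤ) (k : J) {r : J → K}
    (hr : ∀ j, 0 < r j) (j : J) : 0 < mutX B k r j := by
  by_cases hjk : j = k
  · subst hjk
    rw [mutX_self]
    exact div_pos (add_pos (Finset.prod_pos fun i _ => pow_pos (hr i) _)
      (Finset.prod_pos fun i _ => pow_pos (hr i) _)) (hr j)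
  · rw [mutX_of_ne B r hjk]
    exact hr j

variable {R L : Type*} [CommRing R] [Field L] [Algebra R L] [IsFractionRing R L] {χ : R →+* K}

lemma mutX_mem_fracGraph (B : J → J → ℤ) (k : J) {x : J → L} {z : J → K}
    (h : ∀ j, (x j, z j) ∈ fracGraph L χ) (hz : z k ≠ 0) (j : J) :
    (mutX B k x j, mutX B k z j) ∈ fracGraph L χ := by
  by_cases hjk : j = k
  · subst hjk
    rw [mutX_self, mutX_self]
    exact div_mem_fracGraph (add_mem (prod_pow_mem _ _ h) (prod_pow_mem _ _ h)) (h j) hz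
  · rw [mutX_of_ne B x hjk, mutX_of_ne B z hjk]
    exact h j

lemma exists_pos_mutX_mem_fracGraph [LinearOrder K] [IsStrictOrderedRing K] (B : J → J → ℤ)
    (k : J) {x : J → L} (h : ∀ j, ∃ r, 0 < r ∧ (x j, r) ∈ fracGraph L χ) (j : J) :
    ∃ r, 0 < r ∧ (mutX B k x j, r) ∈ fracGraph L χ := by
  choose r hr hx using h
  exact ⟨_, mutX_pos B k hr j, mutX_mem_fracGraph B k hx (hr k).ne' j⟩

end Mutation

namespace ClusterMorphism

variable {I I' : Type*} {t : Seed I} {t' : Seed I'} (c : ClusterMorphism t t')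

/-- The set `I ∖ F`. -/
def domain : Set I := {i | c.hom (Xv i) ≠ 1}

def toFrac : LaurentRing I →+* LField I' :=
  (algebraMap (LaurentRing I') (LField I')).comp c.hom

variable {c}

lemma hom_Xv_of_mem {j : I} (hj : j ∈ c.domain) : c.hom (Xv j) = Xv (c.vmap j) :=
  (c.hx j).resolve_left hj

lemma hom_Xv_of_notMem {j : I} (hj : j ∉ c.domain) : c.hom (Xv j) = 1 :=
  not_not.mp hj

variable (c)

lemma injOn_vmap : Set.InjOn c.vmap c.domain :=
  fun i hi j hj h => c.vinj i j hi hj h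

lemma hom_Xinv {k : I} (hk : k ∈ c.domain) : c.hom (Xinv k) = Xinv (c.vmap k) := by
  have h := congrArg c.hom (Xv_mul_Xinv k)
  rw [map_mul, map_one, hom_Xv_of_mem hk, ← Xv_mul_Xinv (c.vmap k)] at h
  exact mul_left_cancel₀ (Xv_ne_zero _) h

lemma hom_prod_Xv_pow [Fintype I] [DecidablePred (· ∈ c.domain)] (n : I → ℕ) :
    c.hom (∏ j, Xv j ^ n j) = ∏ j ∈ Finset.univ.filter (· ∈ c.domain), Xv (c.vmap j) ^ n j := by
  rw [map_prod, Finset.prod_filter]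
  refine Finset.prod_congr rfl fun j _ => ?_
  split_ifs with hj
  · rw [map_pow, hom_Xv_of_mem hj]
  · rw [map_pow, hom_Xv_of_notMem hj, one_pow]

lemma exists_unit_column_eq [Fintype I] [Fintype I'] [DecidablePred (· ∈ c.domain)] {k : I}
    (hk : k ∈ t.uf) (hkD : k ∈ c.domain) :
    ∃ ε : ℤˣ, ∑ j ∈ Finset.univ.filter (· ∈ c.domain), Finsupp.single (c.vmap j) (t.B j k) =
      (ε : ℤ) • ∑ j', Finsupp.single j' (t'.B j' (c.vmap k)) := by
  have h := c.hmut k hk hkD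
  rw [exchVar_eq, exchVar_eq, map_mul, map_add, hom_prod_Xv_pow, hom_prod_Xv_pow,
    c.hom_Xinv hkD] at h
  simp only [prod_Xv_pow] at h
  obtain ⟨ε, hε⟩ := AddMonoidAlgebra.exists_unit_sub_eq_of_single_add_single
    (mul_right_cancel₀ (Xinv_ne_zero _) h)
  simp only [Finsupp.sum_single_toNat_sub] at hε
  exact ⟨ε, hε⟩

/-- The exchange relation only pins down column `φ k` of `B'` up to the sign `ε`, because the two
monomials of an exchange binomial may be swapped; the sign condition then makes column `k` of `B`
vanish on `I_uf ∖ F` when `ε = -1`. -/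
def ColumnCompatible (B : I → I → ℤ) (B' : I' → I' → ℤ) (k : I) : Prop :=
  ∃ ε : ℤˣ, (∀ j ∈ c.domain, B' (c.vmap j) (c.vmap k) = ε * B j k) ∧
    (∀ j' ∉ c.vmap '' c.domain, B' j' (c.vmap k) = 0) ∧
    (ε ≠ 1 → ∀ j ∈ t.uf ∩ c.domain, B j k = 0)

lemma columnCompatible_initial [Fintype I] [Fintype I'] {k : I} (hk : k ∈ t.uf)
    (hkD : k ∈ c.domain) : c.ColumnCompatible t.B t'.B k := by
  classical
  obtain ⟨ε, hε⟩ := c.exists_unit_column_eq hk hkD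
  have hεB : ∀ j', (∑ j ∈ Finset.univ.filter (· ∈ c.domain),
      Finsupp.single (c.vmap j) (t.B j k)) j' = ε * t'.B j' (c.vmap k) := fun j' => by
    simp [hε, Finsupp.single_apply]
  have hcol : ∀ j ∈ c.domain, t'.B (c.vmap j) (c.vmap k) = ε * t.B j k := by
    intro j hj
    have h := hεB (c.vmap j)
    rw [Finsupp.sum_single_apply_of_injOn (c.injOn_vmap.mono (by simp)) _ (by simpa using hj)] at h
    rw [h, ← mul_assoc, ← Units.val_mul, Int.units_mul_self, Units.val_one, one_mul]
  refine ⟨ε, hcol, fun j' hj' => ?_, fun hε₁ j hj => ?_⟩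
  · have h := hεB j'
    rw [Finsupp.sum_single_apply_of_notMem_image _ (by simpa using hj')] at h
    exact (mul_eq_zero.mp h.symm).resolve_left (Units.ne_zero ε)
  · have hsign := c.hsign j hj.1 k hk hj.2 hkD
    rw [hcol j hj.2, (Int.units_eq_one_or ε).resolve_left hε₁] at hsign
    simp only [Units.val_neg, Units.val_one, neg_mul, one_mul, mul_neg, neg_nonneg] at hsign
    exact mul_self_eq_zero.mp (le_antisymm hsign (mul_self_nonneg _))

variable {c} {B : I → I → ℤ} {B' : I' → I' → ℤ}

lemma ColumnCompatible.mutB (hB : ∀ i ∈ t.uf, ∀ j ∈ t.uf, B i j = -B j i) {k k₂ : I}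
    (hk : k ∈ t.uf ∩ c.domain) (hk₂ : k₂ ∈ t.uf ∩ c.domain) (h : c.ColumnCompatible B B' k)
    (h₂ : c.ColumnCompatible B B' k₂) :
    c.ColumnCompatible (mutB B k) (mutB B' (c.vmap k)) k₂ := by
  obtain ⟨ε₀, hcol₀, hout₀, hneg₀⟩ := h
  obtain ⟨ε, hcol, hout, hneg⟩ := h₂
  have hkk₂ : ε₀ ≠ 1 ∨ ε ≠ 1 → B k k₂ = 0 := by
    rintro (hε | hε)
    · rw [hB k hk.1 k₂ hk₂.1, hneg₀ hε k₂ hk₂, neg_zero]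
    · exact hneg hε k hk
  refine ⟨ε, ?_⟩
  by_cases hkk : k₂ = k
  · subst hkk
    refine ⟨fun j hj => ?_, fun j' hj' => ?_, fun hε j hj => ?_⟩
    · rw [mutB_self_right, mutB_self_right, hcol j hj, mul_neg]
    · rw [mutB_self_right, hout j' hj', neg_zero]
    · rw [mutB_self_right, hneg hε j hj, neg_zero]
  have hvk : c.vmap k₂ ≠ c.vmap k := fun h => hkk (c.injOn_vmap hk₂.2 hk.2 h)
  refine ⟨fun j hj => ?_, fun j' hj' => ?_, fun hε j hj => ?_⟩
  · by_cases hjk : j = k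
    · subst hjk
      rw [mutB_self_left, mutB_self_left, hcol j hj, mul_neg]
    · have hvj : c.vmap j ≠ c.vmap k := fun h => hjk (c.injOn_vmap hj hk.2 h)
      rw [mutB_of_ne _ hvj hvk, mutB_of_ne _ hjk hkk, hcol j hj, hcol₀ j hj, hcol k hk.2]
      exact (Int.units_mul_add_sign_mul_max ε₀ ε hkk₂).symm
  · have hj'k : j' ≠ c.vmap k := fun h => hj' ⟨k, hk.2, h.symm⟩
    rw [mutB_of_ne _ hj'k hvk, hout j' hj', hout₀ j' hj']
    simp
  · have hb := hkk₂ (Or.inr hε)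
    by_cases hjk : j = k
    · subst hjk
      rw [mutB_self_left, hb, neg_zero]
    · rw [mutB_of_ne _ hjk hkk, hneg hε j hj, hb]
      simp

lemma ColumnCompatible.exchange_mem_fracGraph [Fintype I] [Fintype I'] {k : I}
    (h : c.ColumnCompatible B B' k) {x : I → LField I} {y : I' → LField I'}
    (hx : ∀ j ∈ c.domain, (x j, y (c.vmap j)) ∈ fracGraph (LField I) c.toFrac)
    (hx₁ : ∀ j ∉ c.domain, (x j, 1) ∈ fracGraph (LField I) c.toFrac) :
    ((∏ j, x j ^ (B j k).toNat) + ∏ j, x j ^ (-B j k).toNat,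
      (∏ j', y j' ^ (B' j' (c.vmap k)).toNat) + ∏ j', y j' ^ (-B' j' (c.vmap k)).toNat) ∈
        fracGraph (LField I) c.toFrac := by
  obtain ⟨ε, hcol, hout, -⟩ := h
  have hprod : ∀ g : ℤ → ℕ, g 0 = 0 →
      (∏ j, x j ^ g (ε * B j k), ∏ j', y j' ^ g (B' j' (c.vmap k))) ∈
        fracGraph (LField I) c.toFrac := fun g hg =>
    prod_pow_mem_of_injOn _ c.injOn_vmap hx hx₁ (fun j hj => by rw [hcol j hj])
      (fun j' hj' => by rw [hout j' hj', hg])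
  have hpos := hprod Int.toNat rfl
  have hneg := hprod (fun b => (-b).toNat) rfl
  rcases Int.units_eq_one_or ε with rfl | rfl
  · simp only [Units.val_one, one_mul] at hpos hneg
    exact add_mem hpos hneg
  · simp only [Units.val_neg, Units.val_one, neg_mul, one_mul, neg_neg] at hpos hneg
    simpa only [Prod.mk_add_mk, add_comm (∏ j', y j' ^ (B' j' (c.vmap k)).toNat)] using
      add_mem hneg hpos

variable (c)

structure Intertwines (B : I → I → ℤ) (x : I → LField I) (B' : I' → I' → ℤ)
    (y : I' → LField I') : Prop where
  skew : ∀ i ∈ t.uf, ∀ j ∈ t.uf, B i j = -B j i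
  column : ∀ k ∈ t.uf ∩ c.domain, c.ColumnCompatible B B' k
  mem : ∀ j ∈ c.domain, (x j, y (c.vmap j)) ∈ fracGraph (LField I) c.toFrac
  mem_one : ∀ j ∉ c.domain, (x j, 1) ∈ fracGraph (LField I) c.toFrac
  -- subtraction-free expressions are positive at `(1, …, 1)`, so no `y j'` vanishes
  pos : ∀ j', ∃ r : ℚ, 0 < r ∧ (y j', r) ∈ fracGraph (LField I') (evalOne I')

lemma intertwines_initial [Fintype I] [Fintype I'] :
    c.Intertwines t.B (xGen I) t'.B (xGen I') where
  skew := t.skew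
  column k hk := c.columnCompatible_initial hk.1 hk.2
  mem j hj := by
    simpa [xGen, toFrac, hom_Xv_of_mem hj] using algebraMap_mem_fracGraph (χ := c.toFrac) (Xv j)
  mem_one j hj := by
    simpa [xGen, toFrac, hom_Xv_of_notMem hj] using algebraMap_mem_fracGraph (χ := c.toFrac) (Xv j)
  pos j' := ⟨1, one_pos, by
    simpa [xGen, evalOne_Xv] using
      algebraMap_mem_fracGraph (K := LField I') (χ := evalOne I') (Xv j')⟩

variable {c} [Fintype I] [Fintype I'] {x : I → LField I} {y : I' → LField I'}

lemma Intertwines.mutate (h : c.Intertwines B x B' y) {k : I} (hk : k ∈ t.uf ∩ c.domain) :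
    c.Intertwines (mutB B k) (mutX B k x) (mutB B' (c.vmap k)) (mutX B' (c.vmap k) y) where
  skew := mutB_skew h.skew hk.1
  column k₂ hk₂ := (h.column k hk).mutB h.skew hk hk₂ (h.column k₂ hk₂)
  mem j hj := by
    by_cases hjk : j = k
    · subst hjk
      obtain ⟨r, hr, hyr⟩ := h.pos (c.vmap j)
      rw [mutX_self, mutX_self]
      exact div_mem_fracGraph ((h.column j hk).exchange_mem_fracGraph h.mem h.mem_one)
        (h.mem j hj) (ne_zero_of_mem_fracGraph hyr hr.ne')
    · rw [mutX_of_ne _ _ hjk, mutX_of_ne _ _ fun he => hjk (c.injOn_vmap hj hk.2 he)]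
      exact h.mem j hj
  mem_one j hj := by
    rw [mutX_of_ne _ _ (by rintro rfl; exact hj hk.2)]
    exact h.mem_one j hj
  pos := exists_pos_mutX_mem_fracGraph _ _ h.pos

lemma Intertwines.mutSeq (h : c.Intertwines B x B' y) {l : List I}
    (hl : ∀ k ∈ l, k ∈ t.uf ∩ c.domain) :
    c.Intertwines (mutSeq l (B, x)).1 (mutSeq l (B, x)).2
      (mutSeq (l.map c.vmap) (B', y)).1 (mutSeq (l.map c.vmap) (B', y)).2 := by
  induction l generalizing B x B' y with
  | nil => exact h
  | cons k l ih =>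
    simp only [List.map_cons, mutSeq_cons]
    exact ih (h.mutate (hl k List.mem_cons_self)) fun k' hk' => hl k' (List.mem_cons_of_mem _ hk')

end ClusterMorphism

/-- A cluster morphism `φ : L(t) → L(t')` intertwines arbitrary mutation
sequences supported on the vertices of `I_uf ∖ F` where it is defined: for a sequence
`𝐢 = (i_1, …, i_n)` of vertices of `I_uf ∖ F` and any `i ∈ I ∖ F`, the iterated mutated
cluster variable `μ_𝐢(x)_i ∈ Frac L(t)` has a representation `a / b` with `φ(b)` invertible
(nonzero), and applying `φ` to it yields `μ_{φ(𝐢)}(y)_{φ(i)}`,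
i.e. `φ(μ_𝐢(x)_i) = μ_{φ(𝐢)}(y)_{φ(i)}`. -/
theorem statement2 {I I' : Type*} [Finite I] [Finite I'] (t : Seed I) (t' : Seed I')
    (c : ClusterMorphism t t') (l : List I)
    (hl : ∀ k ∈ l, k ∈ t.uf ∧ c.hom (Xv k) ≠ 1)
    (i : I) (hiF : c.hom (Xv i) ≠ 1) :
    ∃ a b : LaurentRing I, b ≠ 0 ∧ c.hom b ≠ 0 ∧
      (mutSeq l (t.B, xGen I)).2 i =
        algebraMap (LaurentRing I) (LField I) a / algebraMap (LaurentRing I) (LField I) b ∧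
      (mutSeq (l.map c.vmap) (t'.B, xGen I')).2 (c.vmap i) =
        algebraMap (LaurentRing I') (LField I') (c.hom a) /
          algebraMap (LaurentRing I') (LField I') (c.hom b) := by
  cases nonempty_fintype I
  cases nonempty_fintype I'
  obtain ⟨a, b, hb, hab⟩ := (c.intertwines_initial.mutSeq hl).mem i hiF
  have hcb : c.hom b ≠ 0 := fun h => hb (by simp [ClusterMorphism.toFrac, h])
  exact ⟨a, b, fun h => hcb (by simp [h]), hcb, congrArg Prod.fst hab, congrArg Prod.snd hab⟩

end
end

section
/- Every cluster morphism φ: L(t) → L(t') between seeds t = ({x_i}_{i∈I}, I_uf, B) and t' = ({y_j}_{j∈I'}, I'_uf, B') decomposes as φ = 𝔈_H ∘ 𝔉_E ∘ 𝔖_σ ∘ Del_F, where F = {i ∈ I : φ(x_i) = 1}, σ is the bijection from I∖F onto φ(I∖F) induced by φ (σ(i) = j when φ(x_i) = y_j), E = I'_uf ∖ φ(I_uf∖F), and H = I' ∖ φ(I∖F). -/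
open scoped BigOperators

noncomputable section

/-- The ring homomorphism between Laurent rings induced by a map of the variable
index sets, `x_i ↦ x_{f i}`. -/
def reindexHom {I I' : Type*} (f : I → I') : LaurentRing I →+* LaurentRing I' :=
  AddMonoidAlgebra.mapDomainRingHom ℚ (Finsupp.mapDomain.addMonoidHom f)

/-- The deleting morphism `Del_F`: the ring homomorphism with `x_i ↦ 1` for `i ∈ F` and
`x_j ↦ x_j` for `j ∉ F`. -/
def DelHom {I : Type*} (F : Set I) : LaurentRing I →+* LaurentRing {i : I // i ∉ F} :=
  AddMonoidAlgebra.mapDomainRingHom ℚ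
    (AddMonoidHom.mk' (Finsupp.subtypeDomain (fun i => i ∉ F))
      (fun _ _ => Finsupp.subtypeDomain_add))

/-- The similarity morphism `𝔖_σ`: the ring homomorphism with `x_i ↦ y_{σ i}`. -/
def SimHom {I I' : Type*} (σ : I → I') : LaurentRing I →+* LaurentRing I' :=
  reindexHom σ

/-- The freezing morphism `𝔉_E` attached to a set `E` of unfrozen vertices: on the level
of the Laurent polynomial rings it is the identity ring map (only the seed data changes). -/
def FreezeHom {I : Type*} {γ : Type*} (_E : Set γ) : LaurentRing I →+* LaurentRing I :=
  RingHom.id _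

/-- The adding-vertices morphism `𝔈_H`, attached to the complement `s = I' ∖ H` of the
added vertex set: the inclusion `y_j ↦ y_j` of the Laurent polynomial ring on the
variables indexed by `s`. -/
def IncHom {I' : Type*} (s : Set I') : LaurentRing ↥s →+* LaurentRing I' :=
  reindexHom (Subtype.val : ↥s → I')

/-! A ring homomorphism out of a Laurent polynomial ring is determined by the images of the
variables, and both sides send `x_i` to `1` for `i ∈ F` and to `y_{φ(i)}` otherwise. -/

/-- `ext` reduces to the scalars, where ring homomorphisms out of `ℚ` are unique, and to the
monomials `single (single i 1) 1 = Xv i`, since additive maps out of `ℤ` are determined at `1`. -/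
theorem LaurentRing.ringHom_ext {I R : Type*} [Semiring R] {f g : LaurentRing I →+* R}
    (h : ∀ i, f (Xv i) = g (Xv i)) : f = g := by
  ext i
  · exact RingHom.congr_fun (Subsingleton.elim _ _) i
  · exact h i

theorem Xv_ne_one {I : Type*} (i : I) : (Xv i : LaurentRing I) ≠ 1 := by
  rw [Xv, AddMonoidAlgebra.one_def, Ne, AddMonoidAlgebra.single_left_inj one_ne_zero]
  exact Finsupp.single_ne_zero.2 one_ne_zero

@[simp]
theorem reindexHom_Xv {I I' : Type*} (f : I → I') (i : I) : reindexHom f (Xv i) = Xv (f i) := by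
  simp [reindexHom, Xv, AddMonoidAlgebra.mapDomainRingHom]

theorem DelHom_Xv_of_mem {I : Type*} {F : Set I} {i : I} (h : i ∈ F) : DelHom F (Xv i) = 1 := by
  simp only [DelHom, Xv, AddMonoidAlgebra.mapDomainRingHom_apply, AddMonoidHom.mk'_apply,
    AddMonoidAlgebra.mapDomain_single, AddMonoidAlgebra.one_def]
  congr 1
  ext j
  simp [show i ≠ j from fun hij => j.2 (hij ▸ h)]

theorem DelHom_Xv_of_notMem {I : Type*} {F : Set I} {i : I} (h : i ∉ F) :
    DelHom F (Xv i) = Xv ⟨i, h⟩ := by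
  simp only [DelHom, Xv, AddMonoidAlgebra.mapDomainRingHom_apply, AddMonoidHom.mk'_apply,
    AddMonoidAlgebra.mapDomain_single]
  congr 1
  ext j
  exact Finsupp.single_apply_left Subtype.val_injective (⟨i, h⟩ : {i // i ∉ F}) j (1 : ℤ)

@[simp]
theorem FreezeHom_apply {I γ : Type*} (E : Set γ) (x : LaurentRing I) : FreezeHom E x = x := rfl

theorem statement5_general {I I' : Type*} (t : Seed I) (t' : Seed I')
    (c : ClusterMorphism t t') :
    c.hom =
      (IncHom (c.vmap '' {i : I | c.hom (Xv i) ≠ 1})).comp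
        ((FreezeHom (I := ↥(c.vmap '' {i : I | c.hom (Xv i) ≠ 1}))
            (t'.uf \ c.vmap '' {i : I | i ∈ t.uf ∧ c.hom (Xv i) ≠ 1})).comp
          ((SimHom (fun i : {i : I // i ∉ {i : I | c.hom (Xv i) = 1}} =>
              (⟨c.vmap i.1, ⟨i.1, i.2, rfl⟩⟩ :
                ↥(c.vmap '' {i : I | c.hom (Xv i) ≠ 1})))).comp
            (DelHom {i : I | c.hom (Xv i) = 1}))) := by
  refine LaurentRing.ringHom_ext fun i => ?_
  rcases c.hx i with h | h
  · have hi : i ∈ {i : I | c.hom (Xv i) = 1} := h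
    simp [DelHom_Xv_of_mem hi, h]
  · have hi : i ∉ {i : I | c.hom (Xv i) = 1} := fun h1 => Xv_ne_one _ (h.symm.trans h1)
    simp [DelHom_Xv_of_notMem hi, SimHom, IncHom, h]

/-- Every cluster morphism `φ : L(t) → L(t')` decomposes as
`φ = 𝔈_H ∘ 𝔉_E ∘ 𝔖_σ ∘ Del_F`, where `F = {i ∈ I : φ(x_i) = 1}`, `σ` is the bijection
from `I ∖ F` onto `φ(I ∖ F)` induced by `φ`, `E = I'_uf ∖ φ(I_uf ∖ F)`, and
`H = I' ∖ φ(I ∖ F)` (so that `𝔈_H` is the inclusion of the variables indexed by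
`I' ∖ H = φ(I ∖ F)`). -/
theorem statement5 {I I' : Type*} [Finite I] [Finite I'] (t : Seed I) (t' : Seed I')
    (c : ClusterMorphism t t') :
    c.hom =
      (IncHom (c.vmap '' {i : I | c.hom (Xv i) ≠ 1})).comp
        ((FreezeHom (I := ↥(c.vmap '' {i : I | c.hom (Xv i) ≠ 1}))
            (t'.uf \ c.vmap '' {i : I | i ∈ t.uf ∧ c.hom (Xv i) ≠ 1})).comp
          ((SimHom (fun i : {i : I // i ∉ {i : I | c.hom (Xv i) = 1}} =>
              (⟨c.vmap i.1, ⟨i.1, i.2, rfl⟩⟩ :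
                ↥(c.vmap '' {i : I | c.hom (Xv i) ≠ 1})))).comp
            (DelHom {i : I | c.hom (Xv i) = 1}))) :=
  statement5_general t t' c
end
end
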